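/- (Truncation/late-start bound) Under the same abstract setting, fix a truncation index T ∈ ℕ and define the late-started sequence by D₀^T := D₀ and D_{k+1}^T := A_{k+T}·Dₖ^T + B_{k+T}. Then for all k ≥ 1, ‖Dₖ^T − D*‖ ≤ ρᵏ·‖D₀ − D*‖ + k·ρ^{k+T−1}·Γ·e₀. -/

import Mathlib

/-!
Write `D*` for `(1 - A)⁻¹ B`, the fixed point of `D ↦ A D + B`. Comparing the late-started
iteration with this fixed point gives
`Dₖ₊₁ᵀ - D* = Aₖ₊ₜ (Dₖᵀ - D*) + (Aₖ₊ₜ - A) D* + (Bₖ₊ₜ - B)`,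
so with `‖D*‖ ≤ κ / (1 - ρ)` and `e_{k+T} ≤ ρ^{k+T} e₀` the error `dₖ = ‖Dₖᵀ - D*‖` obeys
`dₖ₊₁ ≤ ρ dₖ + ρ^{k+T} Γ e₀`. Unrolling this scalar recursion, each of the `k` forcing terms
contributes exactly `ρ^{k+T-1} Γ e₀`.
-/

section FixedPoint

variable {𝕜 X U : Type*} [NontriviallyNormedField 𝕜]
  [NormedAddCommGroup X] [NormedSpace 𝕜 X] [NormedAddCommGroup U] [NormedSpace 𝕜 U]

namespace ContinuousLinearMap

theorem inverse_one_sub_comp_eq_comp_add [CompleteSpace X] {A : X →L[𝕜] X} (hA : ‖A‖ < 1)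
    (B : U →L[𝕜] X) :
    (Ring.inverse (1 - A)).comp B = A.comp ((Ring.inverse (1 - A)).comp B) + B := by
  have hinv : (1 - A) * Ring.inverse (1 - A) = 1 :=
    Ring.mul_inverse_cancel _ (isUnit_one_sub_of_norm_lt_one hA)
  have hsolve : (1 - A).comp ((Ring.inverse (1 - A)).comp B) = B := by
    rw [← comp_assoc]
    exact congrArg (fun L : X →L[𝕜] X => L.comp B) hinv
  rw [sub_comp, one_def, id_comp] at hsolve
  exact sub_eq_iff_eq_add'.mp hsolve

theorem norm_le_div_one_sub_of_eq_comp_add {A : X →L[𝕜] X} {B D : U →L[𝕜] X} {ρ : ℝ}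
    (hD : D = A.comp D + B) (hA : ‖A‖ ≤ ρ) (hρ : ρ < 1) :
    ‖D‖ ≤ ‖B‖ / (1 - ρ) := by
  have hrec : ‖D‖ ≤ ρ * ‖D‖ + ‖B‖ :=
    calc ‖D‖ = ‖A.comp D + B‖ := by rw [← hD]
      _ ≤ ‖A‖ * ‖D‖ + ‖B‖ := (norm_add_le _ _).trans (by gcongr; exact opNorm_comp_le _ _)
      _ ≤ ρ * ‖D‖ + ‖B‖ := by gcongr
  rw [le_div_iff₀ (by linarith)]
  linarith

theorem norm_comp_add_sub_le_of_eq_comp_add {A A' : X →L[𝕜] X} {B B' D D' : U →L[𝕜] X}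
    (hD : D = A.comp D + B) :
    ‖A'.comp D' + B' - D‖ ≤ ‖A'‖ * ‖D' - D‖ + (‖A' - A‖ * ‖D‖ + ‖B' - B‖) := by
  have hsplit : A'.comp D' + B' - D = A'.comp (D' - D) + ((A' - A).comp D + (B' - B)) := by
    rw [comp_sub, sub_comp]
    nth_rewrite 1 [hD]
    abel
  rw [hsplit]
  refine (norm_add_le _ _).trans (add_le_add (opNorm_comp_le _ _) ?_)
  exact (norm_add_le _ _).trans (add_le_add_left (opNorm_comp_le _ _) _)

end ContinuousLinearMap

end FixedPoint

theorem le_pow_mul_add_of_le_mul_add_pow {d : ℕ → ℝ} {ρ c : ℝ} (m : ℕ) (hρ : 0 ≤ ρ)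
    (hd : ∀ k, d (k + 1) ≤ ρ * d k + ρ ^ (k + m) * c) (k : ℕ) :
    d (k + 1) ≤ ρ ^ (k + 1) * d 0 + (k + 1) * ρ ^ (k + m) * c := by
  induction k with
  | zero => simpa using hd 0
  | succ k ih =>
    calc d (k + 1 + 1) ≤ ρ * d (k + 1) + ρ ^ (k + 1 + m) * c := hd (k + 1)
      _ ≤ ρ * (ρ ^ (k + 1) * d 0 + (k + 1) * ρ ^ (k + m) * c) + ρ ^ (k + 1 + m) * c := by
          gcongr
      _ = ρ ^ (k + 1 + 1) * d 0 + ((k + 1 : ℕ) + 1) * ρ ^ (k + 1 + m) * c := by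
          push_cast; ring

theorem stmt_8 {X U : Type*}
    [NormedAddCommGroup X] [NormedSpace ℝ X] [CompleteSpace X]
    [NormedAddCommGroup U] [NormedSpace ℝ U]
    (A : X →L[ℝ] X) (B : U →L[ℝ] X) (ρ κ Mx Mu : ℝ)
    (hρ0 : 0 ≤ ρ) (hρ1 : ρ < 1) (hA : ‖A‖ ≤ ρ) (hB : ‖B‖ ≤ κ)
    (hMx : 0 ≤ Mx) (hMu : 0 ≤ Mu)
    (e : ℕ → ℝ) (he : ∀ k, 0 ≤ e k) (hrece : ∀ k, e (k + 1) ≤ ρ * e k)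
    (Ak : ℕ → X →L[ℝ] X) (Bk : ℕ → U →L[ℝ] X)
    (hAk : ∀ k, ‖Ak k‖ ≤ ρ)
    (hAkA : ∀ k, ‖Ak k - A‖ ≤ Mx * e k)
    (hBkB : ∀ k, ‖Bk k - B‖ ≤ Mu * e k)
    (T : ℕ) (D0 : U →L[ℝ] X) (DT : ℕ → U →L[ℝ] X)
    (hDT0 : DT 0 = D0)
    (hDT : ∀ k, DT (k + 1) = (Ak (k + T)).comp (DT k) + Bk (k + T)) :
    ∀ k, 1 ≤ k →
      ‖DT k - (Ring.inverse (1 - A)).comp B‖ ≤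
        ρ ^ k * ‖D0 - (Ring.inverse (1 - A)).comp B‖ +
          (k : ℝ) * ρ ^ (k + T - 1) * (Mx * κ / (1 - ρ) + Mu) * e 0 := by
  set Ds := (Ring.inverse (1 - A)).comp B
  have hfix : Ds = A.comp Ds + B :=
    ContinuousLinearMap.inverse_one_sub_comp_eq_comp_add (hA.trans_lt hρ1) B
  have hDs : ‖Ds‖ ≤ κ / (1 - ρ) :=
    (ContinuousLinearMap.norm_le_div_one_sub_of_eq_comp_add hfix hA hρ1).trans
      (by gcongr)
  have he_geom (n : ℕ) : e n ≤ ρ ^ n * e 0 := le_geom hρ0 n fun k _ => hrece k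
  have hstep (k : ℕ) : ‖DT (k + 1) - Ds‖ ≤
      ρ * ‖DT k - Ds‖ + ρ ^ (k + T) * ((Mx * κ / (1 - ρ) + Mu) * e 0) := by
    have hΓ : 0 ≤ Mx * κ / (1 - ρ) + Mu := by
      have : 0 ≤ κ := (norm_nonneg B).trans hB
      have : 0 < 1 - ρ := by linarith
      positivity
    calc ‖DT (k + 1) - Ds‖
        ≤ ‖Ak (k + T)‖ * ‖DT k - Ds‖ + (‖Ak (k + T) - A‖ * ‖Ds‖ + ‖Bk (k + T) - B‖) := by
          rw [hDT k]; exact ContinuousLinearMap.norm_comp_add_sub_le_of_eq_comp_add hfix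
      _ ≤ ρ * ‖DT k - Ds‖ + (Mx * e (k + T) * (κ / (1 - ρ)) + Mu * e (k + T)) := by
          gcongr
          exacts [hAk _, mul_nonneg hMx (he _), hAkA _, hBkB _]
      _ = ρ * ‖DT k - Ds‖ + (Mx * κ / (1 - ρ) + Mu) * e (k + T) := by ring
      _ ≤ ρ * ‖DT k - Ds‖ + (Mx * κ / (1 - ρ) + Mu) * (ρ ^ (k + T) * e 0) := by
          gcongr; exact he_geom _
      _ = ρ * ‖DT k - Ds‖ + ρ ^ (k + T) * ((Mx * κ / (1 - ρ) + Mu) * e 0) := by ring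
  intro k hk
  obtain ⟨j, rfl⟩ := Nat.exists_eq_add_of_le' hk
  have hbound := le_pow_mul_add_of_le_mul_add_pow (d := fun k => ‖DT k - Ds‖) T hρ0 hstep j
  rw [hDT0] at hbound
  rw [show j + 1 + T - 1 = j + T by omega]
  push_cast
  linarith
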